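/- For n > 2, the map h on [n]^{(n)} defined by [s_1,...,s_n]^h = [x_1,...,x_n], where x_j = i whenever s_i = j, is an automorphism of order 2 of the graph A(n,n,n), and h does not belong to the subgroup P(S_n) × Q(S_n). -/

import Mathlib

def A (n k r : ℕ) : SimpleGraph (Fin k ↪ Fin n) where
  Adj s t := s ≠ t ∧ (Finset.univ.filter fun i => s i ≠ t i).card = r
  symm := by
    constructor
    rintro s t ⟨hst, hc⟩
    refine ⟨hst.symm, ?_⟩
    have h : (Finset.univ.filter fun i => t i ≠ s i)
        = (Finset.univ.filter fun i => s i ≠ t i) := by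
      ext i
      simp only [Finset.mem_filter, Finset.mem_univ, true_and]
      exact ne_comm
    rw [h]; exact hc
  loopless := by constructor; rintro s ⟨h, _⟩; exact h rfl

def Pfun {n k : ℕ} (g : Equiv.Perm (Fin n)) (s : Fin k ↪ Fin n) : Fin k ↪ Fin n :=
  s.trans g.toEmbedding

def Qfun {n k : ℕ} (h : Equiv.Perm (Fin k)) (s : Fin k ↪ Fin n) : Fin k ↪ Fin n :=
  (h⁻¹).toEmbedding.trans s

noncomputable def psi {n : ℕ} (s : Fin n ↪ Fin n) : Equiv.Perm (Fin n) :=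
  Equiv.ofBijective s (Finite.injective_iff_bijective.mp s.injective)

noncomputable def hmap {n : ℕ} (s : Fin n ↪ Fin n) : Fin n ↪ Fin n :=
  (psi s).symm.toEmbedding

lemma psi_apply {n : ℕ} (s : Fin n ↪ Fin n) (i : Fin n) : psi s i = s i := rfl

lemma psi_toEmbedding {n : ℕ} (σ : Equiv.Perm (Fin n)) : psi σ.toEmbedding = σ :=
  Equiv.ext fun _ => rfl

lemma hmap_toEmbedding {n : ℕ} (σ : Equiv.Perm (Fin n)) :
    hmap σ.toEmbedding = (σ⁻¹).toEmbedding := by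
  simp [hmap, psi_toEmbedding]

lemma hmap_hmap {n : ℕ} (s : Fin n ↪ Fin n) : hmap (hmap s) = s := by
  have : hmap s = ((psi s)⁻¹).toEmbedding := rfl
  rw [this, hmap_toEmbedding, inv_inv]
  ext i; rfl

lemma s_hmap {n : ℕ} (s : Fin n ↪ Fin n) (i : Fin n) : s (hmap s i) = i :=
  (psi s).apply_symm_apply i

lemma hmap_ne_of_ne {n : ℕ} {s t : Fin n ↪ Fin n} (h : ∀ i, s i ≠ t i) :
    ∀ i, hmap s i ≠ hmap t i := by
  intro i he
  have h1 : s (hmap s i) = i := s_hmap s i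
  have h2 : t (hmap t i) = i := s_hmap t i
  rw [← he] at h2
  exact h (hmap s i) (h1.trans h2.symm)
lemma card_filter_univ {n : ℕ} {p : Fin n → Prop} [DecidablePred p] :
    (Finset.univ.filter p).card = n ↔ ∀ i, p i := by
  constructor
  · intro h i
    have hu : Finset.univ.filter p = Finset.univ :=
      Finset.eq_univ_of_card _ (by simpa using h)
    have := Finset.mem_univ i
    rw [← hu, Finset.mem_filter] at this
    exact this.2
  · intro h
    rw [Finset.filter_true_of_mem (fun i _ => h i)]
    simp

lemma adj_iff {n : ℕ} (hn : 0 < n) (s t : Fin n ↪ Fin n) :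
    (A n n n).Adj s t ↔ ∀ i, s i ≠ t i := by
  constructor
  · rintro ⟨_, hc⟩
    exact card_filter_univ.mp hc
  · intro h
    refine ⟨fun he => h ⟨0, hn⟩ (by rw [he]), card_filter_univ.mpr h⟩

/-- For `n > 2`, the inversion map `h` is an automorphism of `A(n,n,n)` of order 2,
and it does not belong to the subgroup `P(Sₙ) × Q(Sₙ)`. -/
theorem stmt16 (n : ℕ) (hn : 2 < n) :
    (∀ s t : Fin n ↪ Fin n, (A n n n).Adj (hmap s) (hmap t) ↔ (A n n n).Adj s t) ∧
    (∀ s : Fin n ↪ Fin n, hmap (hmap s) = s) ∧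
    hmap (n := n) ≠ id ∧
    ¬ ∃ (g : Equiv.Perm (Fin n)) (h : Equiv.Perm (Fin n)),
        ∀ s : Fin n ↪ Fin n, Pfun g (Qfun h s) = hmap s := by
  have hn0 : 0 < n := by omega
  set z0 : Fin n := ⟨0, by omega⟩
  set z1 : Fin n := ⟨1, by omega⟩
  set z2 : Fin n := ⟨2, by omega⟩
  have h01 : z0 ≠ z1 := by simp [z0, z1, Fin.ext_iff]
  have h12 : z1 ≠ z2 := by simp [z1, z2, Fin.ext_iff]
  have h02 : z0 ≠ z2 := by simp [z0, z2, Fin.ext_iff]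
  refine ⟨?_, hmap_hmap, ?_, ?_⟩
  · intro s t
    rw [adj_iff hn0, adj_iff hn0]
    constructor
    · intro h
      have := hmap_ne_of_ne h
      rw [hmap_hmap, hmap_hmap] at this
      exact this
    · exact fun h => hmap_ne_of_ne h
  · intro h
    set a : Equiv.Perm (Fin n) := Equiv.swap z0 z1
    set b : Equiv.Perm (Fin n) := Equiv.swap z1 z2
    have hab : hmap (a * b).toEmbedding = (a * b).toEmbedding := by rw [h]; rfl
    rw [hmap_toEmbedding] at hab
    have : (a * b)⁻¹ = a * b := Equiv.ext fun i => DFunLike.congr_fun hab i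
    have h1 : (a * b)⁻¹ z0 = z2 := by
      simp [a, b, mul_inv_rev, Equiv.Perm.mul_apply, Equiv.swap_inv,
        Equiv.swap_apply_left]
    have h2 : (a * b) z0 = z1 := by
      simp [a, b, Equiv.Perm.mul_apply,
        Equiv.swap_apply_of_ne_of_ne h01 h02, Equiv.swap_apply_left]
    rw [this, h2] at h1
    exact h12 h1
  · rintro ⟨g, h, hgh⟩
    have key : ∀ σ : Equiv.Perm (Fin n), g * σ * h⁻¹ = σ⁻¹ := by
      intro σ
      have := hgh σ.toEmbedding
      rw [hmap_toEmbedding] at this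
      exact Equiv.ext fun i => DFunLike.congr_fun this i
    have hg : g = h := by
      have := key 1
      rw [mul_one, inv_one] at this
      exact eq_of_mul_inv_eq_one this
    subst hg
    have conj : ∀ σ : Equiv.Perm (Fin n), g * σ * g⁻¹ = σ⁻¹ := key
    have comm : ∀ σ τ : Equiv.Perm (Fin n), σ⁻¹ * τ⁻¹ = τ⁻¹ * σ⁻¹ := by
      intro σ τ
      have h1 := conj (σ * τ)
      have h2 := conj σ
      have h3 := conj τ
      have : (g * σ * g⁻¹) * (g * τ * g⁻¹) = g * (σ * τ) * g⁻¹ := by group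
      rw [h1, h2, h3, mul_inv_rev] at this
      exact this
    set a : Equiv.Perm (Fin n) := Equiv.swap z0 z1
    set b : Equiv.Perm (Fin n) := Equiv.swap z1 z2
    have h01 : z0 ≠ z1 := by simp [z0, z1, Fin.ext_iff]
    have h12 : z1 ≠ z2 := by simp [z1, z2, Fin.ext_iff]
    have h02 : z0 ≠ z2 := by simp [z0, z2, Fin.ext_iff]
    have hc := comm a⁻¹ b⁻¹
    rw [inv_inv, inv_inv] at hc
    have e1 : (a * b) z0 = z1 := by
      simp [a, b, Equiv.Perm.mul_apply,
        Equiv.swap_apply_of_ne_of_ne h01 h02, Equiv.swap_apply_left]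
    have e2 : (b * a) z0 = z2 := by
      simp [a, b, Equiv.Perm.mul_apply, Equiv.swap_apply_left]

    rw [hc, e2] at e1
    exact h12 e1.symm
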